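/- arXiv:1711.01389 — 2 statements merged into one kernel-verified Lean document; each statement's English description precedes it below -/
import Mathlib

section
/- For any q > -1 there exist constants c₁(q), c₂(q) > 0 such that for all ξ, η ∈ ℝ^k, c₁(q)(1 + |ξ| + |η|)^q ≤ ∫₀¹ (1 + |ξ + tη|)^q dt ≤ c₂(q)(1 + |ξ| + |η|)^q. -/
/-!
Write `A = 1 + ‖ξ‖ + ‖η‖`. On `[0, 1]` the integrand `1 + ‖ξ + tη‖` is at most `A` and, by the
reverse triangle inequality, at least `1 + |t‖η‖ - ‖ξ‖|`. This settles the upper bound for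
`q ≥ 0` and the lower bound for `q ≤ 0` at once. For `q ≥ 0` the lower bound follows because
`1 + ‖ξ + tη‖ ≥ A / 6` on `[0, 1/4]` or on `[3/4, 1]`. For `-1 < q ≤ 0` the upper bound is
pointwise (`1 + ‖ξ + tη‖ ≥ A / 3`) when `‖η‖` is small compared with `A`; otherwise the
substitution `s = t‖η‖ - ‖ξ‖` bounds the integral by `‖η‖⁻¹ ∫_{-A}^{A} (1 + |s|)^q ds`, which is
`O(A^(q+1) / ‖η‖) = O(A^q)` because `q + 1 > 0`.
-/

open Real MeasureTheory Set intervalIntegral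

section ConstantBounds

variable {f : ℝ → ℝ} {a b c : ℝ}

lemma mul_le_integral_of_forall_le (hab : a ≤ b) (hf : IntervalIntegrable f volume a b)
    (h : ∀ t ∈ Icc a b, c ≤ f t) : (b - a) * c ≤ ∫ t in a..b, f t := by
  calc (b - a) * c = ∫ _ in a..b, c := by rw [intervalIntegral.integral_const, smul_eq_mul]
    _ ≤ ∫ t in a..b, f t := integral_mono_on hab intervalIntegrable_const hf h

lemma integral_le_mul_of_forall_le (hab : a ≤ b) (hf : IntervalIntegrable f volume a b)
    (h : ∀ t ∈ Icc a b, f t ≤ c) : ∫ t in a..b, f t ≤ (b - a) * c := by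
  calc ∫ t in a..b, f t ≤ ∫ _ in a..b, c := integral_mono_on hab hf intervalIntegrable_const h
    _ = (b - a) * c := by rw [intervalIntegral.integral_const, smul_eq_mul]

end ConstantBounds

section OneAddAbsRpow

variable {q : ℝ}

lemma integral_zero_one_add_rpow (hq : -1 < q) (m : ℝ) :
    ∫ s in (0 : ℝ)..m, (1 + s) ^ q = ((1 + m) ^ (q + 1) - 1) / (q + 1) := by
  rw [integral_comp_add_left (fun s => s ^ q), integral_rpow (Or.inl hq), add_zero, one_rpow]

lemma integral_one_add_abs_rpow_le (hq : -1 < q) {a b : ℝ} (hab : a ≤ b) :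
    ∫ s in a..b, (1 + |s|) ^ q ≤ 2 * (1 + max |a| |b|) ^ (q + 1) / (q + 1) := by
  set M := max |a| |b|
  have hM : 0 ≤ M := (abs_nonneg a).trans (le_max_left _ _)
  have hcont : Continuous fun s : ℝ => (1 + |s|) ^ q :=
    (continuous_const.add continuous_abs).rpow_const fun s =>
      Or.inl (by positivity : (0 : ℝ) < 1 + |s|).ne'
  have half : ∫ s in (0 : ℝ)..M, (1 + |s|) ^ q = ((1 + M) ^ (q + 1) - 1) / (q + 1) := by
    rw [← integral_zero_one_add_rpow hq M]
    refine integral_congr fun s hs => ?_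
    rw [uIcc_of_le hM] at hs
    simp only [abs_of_nonneg hs.1]
  have symm : ∫ s in -M..0, (1 + |s|) ^ q = ∫ s in (0 : ℝ)..M, (1 + |s|) ^ q := by
    simpa only [abs_neg, neg_zero] using
      (integral_comp_neg (a := 0) (b := M) fun s => (1 + |s|) ^ q).symm
  calc ∫ s in a..b, (1 + |s|) ^ q
      ≤ ∫ s in -M..M, (1 + |s|) ^ q :=
        integral_mono_interval (neg_le.mp ((neg_le_abs a).trans (le_max_left _ _))) hab
          ((le_abs_self b).trans (le_max_right _ _))
          (ae_of_all _ fun s => rpow_nonneg (by positivity) q) (hcont.intervalIntegrable _ _)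
    _ = 2 * (((1 + M) ^ (q + 1) - 1) / (q + 1)) := by
        rw [← integral_add_adjacent_intervals (hcont.intervalIntegrable _ 0)
          (hcont.intervalIntegrable _ _), symm, half]
        ring
    _ ≤ 2 * (1 + M) ^ (q + 1) / (q + 1) := by
        rw [mul_div_assoc]
        gcongr <;> linarith

end OneAddAbsRpow

section Segment

variable {E : Type*} [SeminormedAddCommGroup E] [NormedSpace ℝ E] (ξ η : E) {q : ℝ}

lemma norm_add_smul_le_of_mem_Icc {t : ℝ} (ht : t ∈ Icc (0 : ℝ) 1) :
    ‖ξ + t • η‖ ≤ ‖ξ‖ + ‖η‖ := by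
  calc ‖ξ + t • η‖ ≤ ‖ξ‖ + t * ‖η‖ := by
        simpa [norm_smul, abs_of_nonneg ht.1] using norm_add_le ξ (t • η)
    _ ≤ ‖ξ‖ + ‖η‖ := by gcongr; exact mul_le_of_le_one_left (norm_nonneg η) ht.2

lemma abs_norm_mul_sub_norm_le {t : ℝ} (ht : 0 ≤ t) : |‖η‖ * t - ‖ξ‖| ≤ ‖ξ + t • η‖ := by
  simpa [norm_smul, abs_of_nonneg ht, add_comm, mul_comm] using abs_norm_sub_norm_le (t • η) (-ξ)

lemma continuous_one_add_norm_add_smul_rpow (q : ℝ) :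
    Continuous fun t : ℝ => (1 + ‖ξ + t • η‖) ^ q :=
  (continuous_const.add (continuous_const.add (continuous_id.smul continuous_const)).norm
    ).rpow_const fun t => Or.inl (by positivity : (0 : ℝ) < 1 + ‖ξ + t • η‖).ne'

lemma integral_one_add_norm_add_smul_rpow_le (hq : 0 ≤ q) :
    ∫ t in (0 : ℝ)..1, (1 + ‖ξ + t • η‖) ^ q ≤ (1 + ‖ξ‖ + ‖η‖) ^ q := by
  simpa using integral_le_mul_of_forall_le zero_le_one
    ((continuous_one_add_norm_add_smul_rpow ξ η q).intervalIntegrable 0 1) fun t ht =>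
      rpow_le_rpow (by positivity) (by linarith [norm_add_smul_le_of_mem_Icc ξ η ht]) hq

lemma le_integral_one_add_norm_add_smul_rpow (hq : q ≤ 0) :
    (1 + ‖ξ‖ + ‖η‖) ^ q ≤ ∫ t in (0 : ℝ)..1, (1 + ‖ξ + t • η‖) ^ q := by
  simpa using mul_le_integral_of_forall_le zero_le_one
    ((continuous_one_add_norm_add_smul_rpow ξ η q).intervalIntegrable 0 1) fun t ht =>
      rpow_le_rpow_of_nonpos (by positivity) (by linarith [norm_add_smul_le_of_mem_Icc ξ η ht]) hq

lemma exists_Icc_div_six_le_one_add_norm_add_smul :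
    ∃ a ∈ Icc (0 : ℝ) (3 / 4), ∀ t ∈ Icc a (a + 1 / 4),
      (1 + ‖ξ‖ + ‖η‖) / 6 ≤ 1 + ‖ξ + t • η‖ := by
  have hN := norm_nonneg η
  rcases le_total ‖η‖ (2 * ‖ξ‖) with h | h
  · refine ⟨0, by norm_num, fun t ht => ?_⟩
    have := (neg_le_abs _).trans (abs_norm_mul_sub_norm_le ξ η ht.1)
    nlinarith [ht.2]
  · refine ⟨3 / 4, by norm_num, fun t ht => ?_⟩
    have := (le_abs_self _).trans (abs_norm_mul_sub_norm_le ξ η (by linarith [ht.1] : (0 : ℝ) ≤ t))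
    nlinarith [ht.1]

lemma le_integral_one_add_norm_add_smul_rpow_of_nonneg (hq : 0 ≤ q) :
    6 ^ (-q) / 4 * (1 + ‖ξ‖ + ‖η‖) ^ q ≤ ∫ t in (0 : ℝ)..1, (1 + ‖ξ + t • η‖) ^ q := by
  obtain ⟨a, ha, hlarge⟩ := exists_Icc_div_six_le_one_add_norm_add_smul ξ η
  have hcont := continuous_one_add_norm_add_smul_rpow ξ η q
  calc 6 ^ (-q) / 4 * (1 + ‖ξ‖ + ‖η‖) ^ q = (a + 1 / 4 - a) * ((1 + ‖ξ‖ + ‖η‖) / 6) ^ q := by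
        rw [div_rpow (by positivity) (by norm_num), rpow_neg (by norm_num)]; ring
    _ ≤ ∫ t in a..a + 1 / 4, (1 + ‖ξ + t • η‖) ^ q :=
        mul_le_integral_of_forall_le (by linarith) (hcont.intervalIntegrable _ _) fun t ht =>
          rpow_le_rpow (by positivity) (hlarge t ht) hq
    _ ≤ ∫ t in (0 : ℝ)..1, (1 + ‖ξ + t • η‖) ^ q :=
        integral_mono_interval ha.1 (by linarith) (by linarith [ha.2])
          (ae_of_all _ fun t => rpow_nonneg (by positivity) q) (hcont.intervalIntegrable _ _)

lemma integral_one_add_norm_add_smul_rpow_le_of_two_mul_le (hq : q ≤ 0)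
    (h : 2 * ‖η‖ ≤ 1 + ‖ξ‖) :
    ∫ t in (0 : ℝ)..1, (1 + ‖ξ + t • η‖) ^ q ≤ 3 ^ (-q) * (1 + ‖ξ‖ + ‖η‖) ^ q := by
  have hN := norm_nonneg η
  calc ∫ t in (0 : ℝ)..1, (1 + ‖ξ + t • η‖) ^ q ≤ (1 - 0) * ((1 + ‖ξ‖ + ‖η‖) / 3) ^ q :=
        integral_le_mul_of_forall_le zero_le_one
          ((continuous_one_add_norm_add_smul_rpow ξ η q).intervalIntegrable _ _) fun t ht => by
            have := (neg_le_abs _).trans (abs_norm_mul_sub_norm_le ξ η ht.1)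
            exact rpow_le_rpow_of_nonpos (by positivity) (by nlinarith [ht.2]) hq
    _ = 3 ^ (-q) * (1 + ‖ξ‖ + ‖η‖) ^ q := by
        rw [div_rpow (by positivity) (by norm_num), rpow_neg (by norm_num)]; ring

lemma integral_one_add_norm_add_smul_rpow_le_of_le_three_mul (hq : -1 < q) (hq0 : q ≤ 0)
    (h : 1 + ‖ξ‖ + ‖η‖ ≤ 3 * ‖η‖) :
    ∫ t in (0 : ℝ)..1, (1 + ‖ξ + t • η‖) ^ q ≤ 6 / (q + 1) * (1 + ‖ξ‖ + ‖η‖) ^ q := by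
  set r := ‖ξ‖
  set N := ‖η‖
  set A := 1 + r + N
  have hr : 0 ≤ r := norm_nonneg ξ
  have hN : 0 < N := by linarith
  have hA : 0 < A := by positivity
  have hq1 : 0 < q + 1 := by linarith
  have hcont : Continuous fun t : ℝ => (1 + |N * t - r|) ^ q :=
    (continuous_const.add ((continuous_const.mul continuous_id).sub continuous_const).abs
      ).rpow_const fun t => Or.inl (by positivity : (0 : ℝ) < 1 + |N * t - r|).ne'
  calc ∫ t in (0 : ℝ)..1, (1 + ‖ξ + t • η‖) ^ q ≤ ∫ t in (0 : ℝ)..1, (1 + |N * t - r|) ^ q :=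
        integral_mono_on zero_le_one
          ((continuous_one_add_norm_add_smul_rpow ξ η q).intervalIntegrable _ _)
          (hcont.intervalIntegrable _ _) fun t ht =>
            rpow_le_rpow_of_nonpos (by positivity)
              (by linarith [abs_norm_mul_sub_norm_le ξ η ht.1]) hq0
    _ = N⁻¹ * ∫ s in N * 0 - r..N * 1 - r, (1 + |s|) ^ q := by
        rw [integral_comp_mul_sub (fun s => (1 + |s|) ^ q) hN.ne' r, smul_eq_mul]
    _ ≤ N⁻¹ * (2 * (1 + max |N * 0 - r| |N * 1 - r|) ^ (q + 1) / (q + 1)) := by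
        gcongr
        exact integral_one_add_abs_rpow_le hq (by linarith)
    _ ≤ N⁻¹ * (2 * A ^ (q + 1) / (q + 1)) := by
        have hmax : max |N * 0 - r| |N * 1 - r| ≤ r + N := by
          refine max_le ?_ ?_
          · rw [mul_zero, zero_sub, abs_neg, abs_of_nonneg hr]; linarith
          · rw [mul_one]; linarith [abs_sub N r, abs_of_nonneg hN.le, abs_of_nonneg hr]
        gcongr
        linarith
    _ = 2 * (A / N) / (q + 1) * A ^ q := by
        rw [rpow_add_one hA.ne']; field_simp
    _ ≤ 6 / (q + 1) * A ^ q := by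
        gcongr
        linarith [(div_le_iff₀ hN).2 (by linarith : A ≤ 3 * N)]

lemma integral_one_add_norm_add_smul_rpow_le_of_nonpos (hq : -1 < q) (hq0 : q ≤ 0) :
    ∫ t in (0 : ℝ)..1, (1 + ‖ξ + t • η‖) ^ q ≤
      max (3 ^ (-q)) (6 / (q + 1)) * (1 + ‖ξ‖ + ‖η‖) ^ q := by
  have hA : 0 ≤ (1 + ‖ξ‖ + ‖η‖) ^ q := rpow_nonneg (by positivity) q
  rcases le_or_gt (2 * ‖η‖) (1 + ‖ξ‖) with h | h
  · exact (integral_one_add_norm_add_smul_rpow_le_of_two_mul_le ξ η hq0 h).trans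
      (mul_le_mul_of_nonneg_right (le_max_left _ _) hA)
  · exact (integral_one_add_norm_add_smul_rpow_le_of_le_three_mul ξ η hq hq0 (by linarith)).trans
      (mul_le_mul_of_nonneg_right (le_max_right _ _) hA)

end Segment

theorem stmt_4 (k : ℕ) (q : ℝ) (hq : -1 < q) :
    ∃ c₁ c₂ : ℝ, 0 < c₁ ∧ 0 < c₂ ∧
      ∀ ξ η : EuclideanSpace ℝ (Fin k),
        c₁ * (1 + ‖ξ‖ + ‖η‖) ^ q ≤ (∫ t in (0:ℝ)..1, (1 + ‖ξ + t • η‖) ^ q) ∧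
        (∫ t in (0:ℝ)..1, (1 + ‖ξ + t • η‖) ^ q) ≤ c₂ * (1 + ‖ξ‖ + ‖η‖) ^ q := by
  rcases le_total 0 q with hq0 | hq0
  · refine ⟨6 ^ (-q) / 4, 1, by positivity, one_pos, fun ξ η => ⟨?_, ?_⟩⟩
    · exact le_integral_one_add_norm_add_smul_rpow_of_nonneg ξ η hq0
    · simpa using integral_one_add_norm_add_smul_rpow_le ξ η hq0
  · have hq1 : 0 < q + 1 := by linarith
    refine ⟨1, max (3 ^ (-q)) (6 / (q + 1)), one_pos, by positivity, fun ξ η => ⟨?_, ?_⟩⟩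
    · simpa using le_integral_one_add_norm_add_smul_rpow ξ η hq0
    · exact integral_one_add_norm_add_smul_rpow_le_of_nonpos ξ η hq hq0
end

section
/- Let A be an open subset of ℝ^n and λ a non-negative, increasing, finite set function defined on open subsets of A that is countably superadditive: Σᵢ λ(𝒪ᵢ) ≤ λ(⋃ᵢ 𝒪ᵢ) for every countable pairwise-disjoint family {𝒪ᵢ} of open subsets of A. Then for 0 < τ < n, the set E^τ := {x ∈ A : limsup_{ρ→0⁺} ρ^(−τ) λ(B_ρ(x)) > 0} has Hausdorff dimension at most τ. -/
/-!
A point of `E^τ` has arbitrarily small radii with `ρ ^ τ ≤ m λ(B_ρ(x))` for some `m : ℕ`, so `E^τ`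
is a countable union of sets `E_m` with this property for a fixed `m`. At a scale `δ`, the Vitali
covering lemma extracts from these balls a countable disjoint subfamily whose fourfold enlargements
cover `E_m`; superadditivity bounds `∑ ρᵢ ^ τ` by `m λ(A)`, so the `d`-dimensional covering sums
are `O(δ ^ (d - τ))`. Hence `μH[d] E_m = 0` for every `d > τ`.
-/

open Metric Filter Set MeasureTheory
open scoped ENNReal Topology

section
variable {X : Type*} [MetricSpace X]

def IsCountablySuperadditiveOn (lam : Set X → ℝ≥0∞) (A : Set X) : Prop :=
  ∀ O : ℕ → Set X, (∀ i, IsOpen (O i)) → (∀ i, O i ⊆ A) → Pairwise (Function.onFun Disjoint O) →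
    ∑' i, lam (O i) ≤ lam (⋃ i, O i)

theorem IsCountablySuperadditiveOn.tsum_le_iUnion {lam : Set X → ℝ≥0∞} {A : Set X}
    (hsuper : IsCountablySuperadditiveOn lam A) {ι : Type*} [Countable ι] {O : ι → Set X}
    (hO : ∀ i, IsOpen (O i)) (hOA : ∀ i, O i ⊆ A) (hdisj : Pairwise (Function.onFun Disjoint O)) :
    ∑' i, lam (O i) ≤ lam (⋃ i, O i) := by
  obtain ⟨g, hg⟩ := exists_injective_nat ι
  set O' : ℕ → Set X := Function.extend g O fun _ => ∅
  have hO'g : ∀ i, O' (g i) = O i := hg.extend_apply O _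
  have hO' : ∀ k, (∃ i, g i = k) ∨ O' k = ∅ := fun k =>
    (em _).imp_right fun h => Function.extend_apply' _ _ _ h
  have hunion : ⋃ k, O' k = ⋃ i, O i := by
    refine Subset.antisymm (iUnion_subset fun k => ?_) (iUnion_subset fun i => ?_)
    · rcases hO' k with ⟨i, rfl⟩ | h
      · exact (hO'g i).symm ▸ subset_iUnion O i
      · exact h ▸ empty_subset _
    · exact hO'g i ▸ subset_iUnion O' (g i)
  have hopen : ∀ k, IsOpen (O' k) := fun k => by
    rcases hO' k with ⟨i, rfl⟩ | h
    · exact (hO'g i).symm ▸ hO i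
    · exact h ▸ isOpen_empty
  have hsub : ∀ k, O' k ⊆ A := fun k => by
    rcases hO' k with ⟨i, rfl⟩ | h
    · exact (hO'g i).symm ▸ hOA i
    · exact h ▸ empty_subset A
  have hdisj' : Pairwise (Function.onFun Disjoint O') := by
    intro j k hjk
    rcases hO' j with ⟨i, rfl⟩ | hj
    · rcases hO' k with ⟨i', rfl⟩ | hk
      · simp only [Function.onFun, hO'g]
        exact hdisj fun h => hjk (congrArg g h)
      · simp only [Function.onFun, hk, disjoint_empty]
    · simp only [Function.onFun, hj, empty_disjoint]
  calc ∑' i, lam (O i) = ∑' i, lam (O' (g i)) := by simp only [hO'g]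
    _ ≤ ∑' k, lam (O' k) := ENNReal.tsum_comp_le_tsum_of_injective hg _
    _ ≤ lam (⋃ k, O' k) := hsuper O' hopen hsub hdisj'
    _ = lam (⋃ i, O i) := by rw [hunion]

theorem exists_countable_pairwiseDisjoint_closedBall_cover [TopologicalSpace.SeparableSpace X]
    (E : Set X) (r : X → ℝ) (hr : ∀ x ∈ E, 0 < r x) {R : ℝ} (hR : ∀ x ∈ E, r x ≤ R) :
    ∃ u ⊆ E, u.Countable ∧ u.PairwiseDisjoint (fun x => closedBall x (r x)) ∧
      E ⊆ ⋃ x ∈ u, closedBall x (4 * r x) := by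
  obtain ⟨u, huE, hdisj, hcov⟩ :=
    Vitali.exists_disjoint_subfamily_covering_enlargement_closedBall E id r R hR 4 (by norm_num)
  refine ⟨u, huE, hdisj.countable_of_nonempty_interior fun x hx => ⟨x, ?_⟩, hdisj, fun x hx => ?_⟩
  · exact ball_subset_interior_closedBall (mem_ball_self (hr x (huE hx)))
  · obtain ⟨b, hbu, hb⟩ := hcov x hx
    exact mem_biUnion hbu (hb (mem_closedBall_self (hr x hx).le))

theorem ediam_closedBall_le_ofReal (x : X) (ρ : ℝ) :
    ediam (closedBall x ρ) ≤ ENNReal.ofReal (2 * ρ) :=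
  ediam_le_of_forall_dist_le fun y hy z hz =>
    (dist_triangle_right y z x).trans (by linarith [mem_closedBall.1 hy, mem_closedBall.1 hz])

theorem ediam_closedBall_rpow_le (x : X) {ρ δ τ d : ℝ} (hρ : 0 < ρ) (hρδ : ρ ≤ δ) (hd : 0 < d)
    (hτd : τ ≤ d) :
    ediam (closedBall x (4 * ρ)) ^ d ≤
      ENNReal.ofReal (8 ^ d * δ ^ (d - τ)) * ENNReal.ofReal (ρ ^ τ) := by
  have hδ : 0 < δ := hρ.trans_le hρδ
  have hreal : (8 * ρ) ^ d ≤ 8 ^ d * δ ^ (d - τ) * ρ ^ τ := by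
    rw [Real.mul_rpow (by norm_num) hρ.le, mul_assoc, ← sub_add_cancel d τ, Real.rpow_add hρ,
      add_sub_cancel_right]
    gcongr
  calc ediam (closedBall x (4 * ρ)) ^ d ≤ ENNReal.ofReal (8 * ρ) ^ d := by
        refine ENNReal.rpow_le_rpow ((ediam_closedBall_le_ofReal x _).trans_eq ?_) hd.le
        ring_nf
    _ = ENNReal.ofReal ((8 * ρ) ^ d) := ENNReal.ofReal_rpow_of_nonneg (by positivity) hd.le
    _ ≤ ENNReal.ofReal (8 ^ d * δ ^ (d - τ) * ρ ^ τ) := ENNReal.ofReal_le_ofReal hreal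
    _ = _ := ENNReal.ofReal_mul (by positivity)

theorem tsum_ediam_closedBall_rpow_le {lam : Set X → ℝ≥0∞} {A : Set X}
    (hsuper : IsCountablySuperadditiveOn lam A) (hmono : ∀ O, IsOpen O → O ⊆ A → lam O ≤ lam A)
    {M : ℝ≥0∞} {τ d δ : ℝ} (hd : 0 < d) (hτd : τ ≤ d) {u : Set X} (hu : u.Countable) {r : X → ℝ}
    (hdisj : u.PairwiseDisjoint fun x => ball x (r x)) (hr0 : ∀ x ∈ u, 0 < r x)
    (hrδ : ∀ x ∈ u, r x ≤ δ) (hrA : ∀ x ∈ u, ball x (r x) ⊆ A)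
    (hrM : ∀ x ∈ u, ENNReal.ofReal (r x ^ τ) ≤ M * lam (ball x (r x))) :
    ∑' x : u, ediam (closedBall (x : X) (4 * r x)) ^ d ≤
      ENNReal.ofReal (8 ^ d * δ ^ (d - τ)) * (M * lam A) := by
  have := hu.to_subtype
  have hballs : ∑' x : u, lam (ball (x : X) (r x)) ≤ lam A :=
    (hsuper.tsum_le_iUnion (O := fun x : u => ball (x : X) (r x)) (fun _ => isOpen_ball)
      (fun x => hrA x x.2) ((pairwise_subtype_iff_pairwise_set u _).2 hdisj)).trans
      (hmono _ (isOpen_iUnion fun _ => isOpen_ball) (iUnion_subset fun x => hrA x x.2))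
  calc ∑' x : u, ediam (closedBall (x : X) (4 * r x)) ^ d
      ≤ ∑' x : u, ENNReal.ofReal (8 ^ d * δ ^ (d - τ)) * (M * lam (ball (x : X) (r x))) :=
        ENNReal.tsum_le_tsum fun x =>
          (ediam_closedBall_rpow_le _ (hr0 x x.2) (hrδ x x.2) hd hτd).trans
            (mul_le_mul_right (hrM x x.2) _)
    _ = ENNReal.ofReal (8 ^ d * δ ^ (d - τ)) * (M * ∑' x : u, lam (ball (x : X) (r x))) := by
        rw [ENNReal.tsum_mul_left, ENNReal.tsum_mul_left]
    _ ≤ ENNReal.ofReal (8 ^ d * δ ^ (d - τ)) * (M * lam A) := by gcongr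

theorem hausdorffMeasure_eq_zero_of_frequently_rpow_le [TopologicalSpace.SeparableSpace X]
    [MeasurableSpace X] [BorelSpace X] {lam : Set X → ℝ≥0∞} {A : Set X}
    (hsuper : IsCountablySuperadditiveOn lam A) (hmono : ∀ O, IsOpen O → O ⊆ A → lam O ≤ lam A)
    (hA : lam A ≠ ∞) {M : ℝ≥0∞} (hM : M ≠ ∞) {τ d : ℝ} (hd : 0 < d) (hτd : τ < d) {E : Set X}
    (hE : ∀ x ∈ E, ∃ᶠ ρ in 𝓝[>] 0, ball x ρ ⊆ A ∧ ENNReal.ofReal (ρ ^ τ) ≤ M * lam (ball x ρ)) :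
    μH[d] E = 0 := by
  set δ : ℕ → ℝ := fun k => 1 / (k + 1)
  have hδ : ∀ k, 0 < δ k := fun k => by positivity
  have hρ : ∀ k x, x ∈ E → ∃ ρ, ρ ∈ Ioc 0 (δ k) ∧ ball x ρ ⊆ A ∧
      ENNReal.ofReal (ρ ^ τ) ≤ M * lam (ball x ρ) := fun k x hx =>
    ((hE x hx).and_eventually (Ioc_mem_nhdsGT (hδ k))).exists.imp fun _ h => ⟨h.2, h.1⟩
  choose! r hrδ hrA hrM using hρ
  choose u huE hu hdisj hcov using fun k =>
    exists_countable_pairwiseDisjoint_closedBall_cover E (r k) (fun x hx => (hrδ k x hx).1)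
      (fun x hx => (hrδ k x hx).2)
  have : ∀ k, Countable (u k) := fun k => (hu k).to_subtype
  have hδ0 : Tendsto δ atTop (𝓝 0) := tendsto_one_div_add_atTop_nhds_zero_nat
  have hbound : Tendsto (fun k => ENNReal.ofReal (8 ^ d * δ k ^ (d - τ)) * (M * lam A)) atTop
      (𝓝 0) := by
    have hpow : Tendsto (fun k => δ k ^ (d - τ)) atTop (𝓝 0) := by
      have h := (Real.continuousAt_rpow_const 0 (d - τ) (Or.inr (sub_pos.2 hτd).le)).tendsto
      rw [Real.zero_rpow (sub_pos.2 hτd).ne'] at h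
      exact h.comp hδ0
    simpa using ENNReal.Tendsto.mul_const (ENNReal.tendsto_ofReal (hpow.const_mul (8 ^ d)))
      (Or.inr (ENNReal.mul_ne_top hM hA))
  refine nonpos_iff_eq_zero.1 ?_
  calc μH[d] E ≤ liminf (fun k => ∑' x : u k, ediam (closedBall (x : X) (4 * r k x)) ^ d) atTop :=
        Measure.hausdorffMeasure_le_liminf_tsum d E (fun k => ENNReal.ofReal (2 * (4 * δ k)))
          (by simpa using ENNReal.tendsto_ofReal ((hδ0.const_mul 4).const_mul 2))
          (fun k (x : u k) => closedBall (x : X) (4 * r k x))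
          (Eventually.of_forall fun k x => (ediam_closedBall_le_ofReal _ _).trans
            (ENNReal.ofReal_le_ofReal (by linarith [(hrδ k x (huE k x.2)).2])))
          (Eventually.of_forall fun k => (hcov k).trans (biUnion_eq_iUnion _ _).subset)
    _ ≤ liminf (fun k => ENNReal.ofReal (8 ^ d * δ k ^ (d - τ)) * (M * lam A)) atTop :=
        liminf_le_liminf (Eventually.of_forall fun k =>
          tsum_ediam_closedBall_rpow_le hsuper hmono hd hτd.le (hu k)
            ((hdisj k).mono fun _ => ball_subset_closedBall) (fun x hx => (hrδ k x (huE k hx)).1)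
            (fun x hx => (hrδ k x (huE k hx)).2) (fun x hx => hrA k x (huE k hx))
            (fun x hx => hrM k x (huE k hx)))
    _ = 0 := hbound.liminf_eq

theorem exists_nat_frequently_rpow_le_mul {lam : Set X → ℝ≥0∞} {A : Set X} (hA : IsOpen A)
    {x : X} (hx : x ∈ A) {τ : ℝ}
    (h : 0 < limsup (fun ρ : ℝ => ENNReal.ofReal (ρ ^ (-τ)) * lam (ball x ρ)) (𝓝[>] 0)) :
    ∃ m : ℕ, ∃ᶠ ρ in 𝓝[>] 0, ball x ρ ⊆ A ∧ ENNReal.ofReal (ρ ^ τ) ≤ m * lam (ball x ρ) := by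
  obtain ⟨m, hm⟩ := ENNReal.exists_inv_nat_lt h.ne'
  have hm0 : (m : ℝ≥0∞) ≠ 0 := fun h0 => by simp [h0] at hm
  obtain ⟨ε, hε, hεA⟩ := Metric.isOpen_iff.1 hA x hx
  refine ⟨m, ((frequently_lt_of_lt_limsup (by isBoundedDefault) hm).and_eventually
    (Ioo_mem_nhdsGT hε)).mono ?_⟩
  rintro ρ ⟨hlt, hρ0, hρε⟩
  refine ⟨(ball_subset_ball hρε.le).trans hεA, ?_⟩
  have hpow : 0 < ρ ^ τ := Real.rpow_pos_of_pos hρ0 τ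
  rw [Real.rpow_neg hρ0.le, ENNReal.ofReal_inv_of_pos hpow] at hlt
  have := (ENNReal.mul_le_iff_le_inv (ENNReal.ofReal_pos.2 hpow).ne' ENNReal.ofReal_ne_top).2 hlt.le
  rw [mul_comm]
  exact (ENNReal.mul_inv_le_iff hm0 (ENNReal.natCast_ne_top m)).1 this

theorem dimH_le_ofReal_of_hausdorffMeasure_eq_zero [MeasurableSpace X] [BorelSpace X] {s : Set X}
    {τ : ℝ} (h : ∀ d : ℝ, τ < d → μH[d] s = 0) : dimH s ≤ ENNReal.ofReal τ := by
  refine dimH_le fun d hd => ?_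
  by_contra! hlt
  rw [← ENNReal.ofReal_coe_nnreal, ENNReal.ofReal_lt_ofReal_iff'] at hlt
  simp [h d hlt.1] at hd

end

theorem stmt_15_general (n : ℕ) (A : Set (EuclideanSpace ℝ (Fin n))) (hA : IsOpen A)
    (lam : Set (EuclideanSpace ℝ (Fin n)) → ENNReal)
    (hfin : ∀ O, IsOpen O → O ⊆ A → lam O < ⊤)
    (hmono : ∀ O₁ O₂, IsOpen O₁ → IsOpen O₂ → O₁ ⊆ O₂ → O₂ ⊆ A → lam O₁ ≤ lam O₂)
    (hsuper : ∀ O : ℕ → Set (EuclideanSpace ℝ (Fin n)),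
      (∀ i, IsOpen (O i)) → (∀ i, O i ⊆ A) → Pairwise (Function.onFun Disjoint O) →
      ∑' i, lam (O i) ≤ lam (⋃ i, O i))
    (τ : ℝ) (hτ : 0 < τ) :
    dimH {x | x ∈ A ∧
        0 < limsup (fun ρ : ℝ => ENNReal.ofReal (ρ ^ (-τ)) * lam (ball x ρ))
          (nhdsWithin 0 (Ioi 0))} ≤ ENNReal.ofReal τ := by
  set E : ℕ → Set (EuclideanSpace ℝ (Fin n)) := fun m =>
    {x | ∃ᶠ ρ in 𝓝[>] 0, ball x ρ ⊆ A ∧ ENNReal.ofReal (ρ ^ τ) ≤ m * lam (ball x ρ)}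
  have hsub : {x | x ∈ A ∧ 0 < limsup (fun ρ : ℝ => ENNReal.ofReal (ρ ^ (-τ)) * lam (ball x ρ))
      (nhdsWithin 0 (Ioi 0))} ⊆ ⋃ m, E m := fun x hx =>
    mem_iUnion.2 (exists_nat_frequently_rpow_le_mul hA hx.1 hx.2)
  refine (dimH_mono hsub).trans ?_
  rw [dimH_iUnion]
  refine iSup_le fun m => dimH_le_ofReal_of_hausdorffMeasure_eq_zero fun d hd =>
    hausdorffMeasure_eq_zero_of_frequently_rpow_le hsuper
      (fun O hO hOA => hmono O A hO hA hOA subset_rfl) (hfin A hA subset_rfl).ne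
      (ENNReal.natCast_ne_top m) (hτ.trans hd) hd fun x hx => hx

theorem stmt_15 (n : ℕ) (A : Set (EuclideanSpace ℝ (Fin n))) (hA : IsOpen A)
    (lam : Set (EuclideanSpace ℝ (Fin n)) → ENNReal)
    (hfin : ∀ O, IsOpen O → O ⊆ A → lam O < ⊤)
    (hmono : ∀ O₁ O₂, IsOpen O₁ → IsOpen O₂ → O₁ ⊆ O₂ → O₂ ⊆ A → lam O₁ ≤ lam O₂)
    (hsuper : ∀ O : ℕ → Set (EuclideanSpace ℝ (Fin n)),
      (∀ i, IsOpen (O i)) → (∀ i, O i ⊆ A) → Pairwise (Function.onFun Disjoint O) →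
      ∑' i, lam (O i) ≤ lam (⋃ i, O i))
    (τ : ℝ) (hτ : 0 < τ) (hτn : τ < n) :
    dimH {x | x ∈ A ∧
        0 < limsup (fun ρ : ℝ => ENNReal.ofReal (ρ ^ (-τ)) * lam (ball x ρ))
          (nhdsWithin 0 (Ioi 0))} ≤ ENNReal.ofReal τ :=
  stmt_15_general n A hA lam hfin hmono hsuper τ hτ
end
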